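/- A channel Λ : L(H_E) → L(H_B) is entanglement-breaking (i.e., (Λ ⊗ id)(ρ) is separable for every state ρ on H_E ⊗ H_{E'} and every finite-dimensional H_{E'}) if and only if its normalized Choi operator J(Λ)/dim(H_E) is a separable state on H_E ⊗ H_B. -/

import Mathlib

open Matrix
open scoped Kronecker ComplexOrder

noncomputable section

variable {n : Type*} [Fintype n] [DecidableEq n]

/-- Square root of a positive semidefinite matrix (0 if not PSD). -/
def msqrt (M : Matrix n n ℂ) : Matrix n n ℂ := by
  classical exact if h : M.PosSemidef then
    (h.1.eigenvectorUnitary : Matrix n n ℂ) *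
      Matrix.diagonal ((↑) ∘ (Real.sqrt ∘ h.1.eigenvalues)) *
      (star h.1.eigenvectorUnitary : Matrix n n ℂ) else 0

/-- Trace norm ‖M‖₁ = tr √(M Mᴴ). -/
def traceNorm (M : Matrix n n ℂ) : ℝ := ((msqrt (M * Mᴴ)).trace).re

/-- Trace distance (1/2)‖ρ − σ‖₁. -/
def traceDist (ρ σ : Matrix n n ℂ) : ℝ := traceNorm (ρ - σ) / 2

/-- Uhlmann fidelity F(ρ,σ) = (tr √(√σ ρ √σ))². -/
def fidelity (ρ σ : Matrix n n ℂ) : ℝ :=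
  (((msqrt (msqrt σ * ρ * msqrt σ)).trace).re) ^ 2

/-- Density operator: positive semidefinite with unit trace. -/
def IsDensity (ρ : Matrix n n ℂ) : Prop := ρ.PosSemidef ∧ ρ.trace = 1

/-- Rank-one operator |v⟩⟨v| associated with a vector. -/
def vecState {α : Type*} (v : α → ℂ) : Matrix α α ℂ :=
  Matrix.of fun i j => v i * (starRingEnd ℂ) (v j)

/-- Pure state: |v⟩⟨v| for some unit vector v. -/
def IsPure {α : Type*} [Fintype α] (φ : Matrix α α ℂ) : Prop :=
  ∃ v : α → ℂ, (∑ i, Complex.normSq (v i)) = 1 ∧ φ = vecState v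

/-- Set of separable states across the cut α : β. -/
def SepSet (α β : Type*) [Fintype α] [Fintype β] : Set (Matrix (α × β) (α × β) ℂ) :=
  convexHull ℝ {σ | ∃ φ ψ, IsPure φ ∧ IsPure ψ ∧ σ = φ ⊗ₖ ψ}

variable {α β : Type*} [Fintype α] [Fintype β] [DecidableEq α] [DecidableEq β]

/-- Extension Γ ⊗ id of a linear map on matrices by a k-dimensional ancilla. -/
def lmapExt (Γ : Matrix α α ℂ →ₗ[ℂ] Matrix β β ℂ) (k : ℕ)
    (M : Matrix (α × Fin k) (α × Fin k) ℂ) : Matrix (β × Fin k) (β × Fin k) ℂ :=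
  Matrix.of fun im jn => Γ (Matrix.of fun p q => M (p, im.2) (q, jn.2)) im.1 jn.1

/-- Completely positive trace-preserving linear map. -/
def IsCPTP (Γ : Matrix α α ℂ →ₗ[ℂ] Matrix β β ℂ) : Prop :=
  (∀ (k : ℕ) (M : Matrix (α × Fin k) (α × Fin k) ℂ), M.PosSemidef →
    (lmapExt Γ k M).PosSemidef) ∧ (∀ M, (Γ M).trace = M.trace)

/-- Partial trace over the second tensor factor. -/
def ptrB (M : Matrix (α × β) (α × β) ℂ) : Matrix α α ℂ :=
  Matrix.of fun i j => ∑ m, M (i, m) (j, m)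

/-- Partial trace over the first tensor factor. -/
def ptrA (M : Matrix (α × β) (α × β) ℂ) : Matrix β β ℂ :=
  Matrix.of fun i j => ∑ m, M (m, i) (m, j)

/-- Choi operator J(Λ) = Σ_{i,j} |i⟩⟨j| ⊗ Λ(|i⟩⟨j|). -/
def choi (Λ : Matrix α α ℂ →ₗ[ℂ] Matrix β β ℂ) : Matrix (α × β) (α × β) ℂ :=
  Matrix.of fun p q => Λ (Matrix.single p.1 q.1 1) p.2 q.2

/-- Entanglement-breaking channel: all extended outputs are separable. -/
def IsEB (Λ : Matrix α α ℂ →ₗ[ℂ] Matrix β β ℂ) : Prop :=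
  IsCPTP Λ ∧ ∀ (k : ℕ) (ρ : Matrix (α × Fin k) (α × Fin k) ℂ), IsDensity ρ →
    lmapExt Λ k ρ ∈ SepSet β (Fin k)

end

/-!
Feeding the normalised maximally entangled state `e⁻¹ |Ω⟩⟨Ω|` to `Λ ⊗ id` produces `e⁻¹ J(Λ)`
with its two factors swapped, so entanglement breaking forces the Choi operator to be separable.
Conversely, if `e⁻¹ J(Λ) = ∑ wᵢ |aᵢ⟩⟨aᵢ| ⊗ |vᵢ⟩⟨vᵢ|`, then
`(Λ ⊗ id)(ρ) = e ∑ wᵢ |vᵢ⟩⟨vᵢ| ⊗ τᵢ` with `τᵢ = (⟨āᵢ| ⊗ 1) ρ (|āᵢ⟩ ⊗ 1) ≥ 0`. Splitting each `τᵢ`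
into rank-one pieces and normalising the vectors writes this as a nonnegative combination of
products of pure states, whose weights sum to `1` because `Λ ⊗ id` preserves the trace.
-/

lemma vecState_eq_vecMulVec {α : Type*} (v : α → ℂ) : vecState v = vecMulVec v (star v) := rfl

lemma vecState_real_smul {α : Type*} (r : ℝ) (v : α → ℂ) :
    vecState (r • v) = (r * r) • vecState v := by
  ext i j
  simp only [vecState, of_apply, Pi.smul_apply, Matrix.smul_apply, Complex.real_smul, map_mul,
    Complex.conj_ofReal, Complex.ofReal_mul]
  ring

section VecState

variable {α : Type*} [Fintype α]

lemma vecState_posSemidef (v : α → ℂ) : (vecState v).PosSemidef := by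
  rw [vecState_eq_vecMulVec]
  exact posSemidef_vecMulVec_self_star v

lemma trace_vecState (v : α → ℂ) :
    (vecState v).trace = ((∑ i, Complex.normSq (v i) : ℝ) : ℂ) := by
  simp [Matrix.trace, vecState, Complex.mul_conj]

lemma vecState_eq_smul_vecState_normalize (v : α → ℂ) :
    vecState v = (∑ i, Complex.normSq (v i)) •
      vecState ((√(∑ i, Complex.normSq (v i)))⁻¹ • v) := by
  set s := ∑ i, Complex.normSq (v i)
  have hs : 0 ≤ s := Finset.sum_nonneg fun i _ => Complex.normSq_nonneg (v i)
  by_cases hs0 : s = 0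
  · have hv : v = 0 := funext fun i => Complex.normSq_eq_zero.mp
      ((Finset.sum_eq_zero_iff_of_nonneg fun i _ => Complex.normSq_nonneg (v i)).mp hs0 i
        (Finset.mem_univ i))
    ext i j
    simp [hv, hs0, vecState]
  · rw [vecState_real_smul, smul_smul, ← mul_inv, Real.mul_self_sqrt hs, mul_inv_cancel₀ hs0,
      one_smul]

lemma isPure_vecState_normalize {v : α → ℂ} (hv : ∑ i, Complex.normSq (v i) ≠ 0) :
    IsPure (vecState ((√(∑ i, Complex.normSq (v i)))⁻¹ • v)) := by
  refine ⟨_, ?_, rfl⟩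
  simp only [Pi.smul_apply, Complex.real_smul, Complex.normSq_mul, Complex.normSq_ofReal,
    ← Finset.mul_sum, ← mul_inv,
    Real.mul_self_sqrt (Finset.sum_nonneg fun i _ => Complex.normSq_nonneg (v i))]
  exact inv_mul_cancel₀ hv

end VecState

lemma sum_kronecker_sum {R ι κ l m n p : Type*} [NonUnitalNonAssocSemiring R] [Fintype ι]
    [Fintype κ] (X : ι → Matrix l m R) (Y : κ → Matrix n p R) :
    (∑ r, X r) ⊗ₖ (∑ s, Y s) = ∑ q : ι × κ, X q.1 ⊗ₖ Y q.2 := by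
  ext x y
  simp [Matrix.sum_apply, Finset.sum_mul_sum, Fintype.sum_prod_type]

section SepSet

variable {α β : Type*} [Fintype α] [Fintype β]

lemma sum_smul_kronecker_vecState_mem_sepSet {ι : Type*} [Fintype ι] (w : ι → ℝ)
    (hw : ∀ i, 0 ≤ w i) (a : ι → α → ℂ) (b : ι → β → ℂ)
    (htr : (∑ i, w i • (vecState (a i) ⊗ₖ vecState (b i))).trace = 1) :
    ∑ i, w i • (vecState (a i) ⊗ₖ vecState (b i)) ∈ SepSet α β := by
  set na := fun i => ∑ x, Complex.normSq (a i x)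
  set nb := fun i => ∑ y, Complex.normSq (b i y)
  have hterm : ∀ i, w i • (vecState (a i) ⊗ₖ vecState (b i)) =
      (w i * na i * nb i) • (vecState ((√(na i))⁻¹ • a i) ⊗ₖ vecState ((√(nb i))⁻¹ • b i)) := by
    intro i
    rw [vecState_eq_smul_vecState_normalize (a i), vecState_eq_smul_vecState_normalize (b i),
      smul_kronecker, kronecker_smul, smul_smul, smul_smul, mul_assoc]
  have hweights : ∑ i, w i * na i * nb i = 1 := by
    simpa [trace_sum, trace_kronecker, trace_vecState, na, nb, Complex.real_smul,
      ← Complex.ofReal_mul, ← Complex.ofReal_sum, mul_assoc] using htr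
  rw [Finset.sum_congr rfl fun i _ => hterm i, ← finsum_eq_sum_of_fintype]
  -- `finsum_mem` only asks for the points of nonzero weight: a zero vector has no pure normalisation.
  refine (convex_convexHull ℝ _).finsum_mem (fun i => ?_) ?_ fun i hi => subset_convexHull ℝ _ ?_
  · exact mul_nonneg (mul_nonneg (hw i) (Finset.sum_nonneg fun _ _ => Complex.normSq_nonneg _))
      (Finset.sum_nonneg fun _ _ => Complex.normSq_nonneg _)
  · rwa [finsum_eq_sum_of_fintype]
  · refine ⟨_, _, isPure_vecState_normalize ?_, isPure_vecState_normalize ?_, rfl⟩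
    · exact fun h => hi (by simp [na, h])
    · exact fun h => hi (by simp [nb, h])

lemma sum_smul_kronecker_mem_sepSet {ι : Type*} [Fintype ι] (w : ι → ℝ) (hw : ∀ i, 0 ≤ w i)
    (A : ι → Matrix α α ℂ) (B : ι → Matrix β β ℂ) (hA : ∀ i, (A i).PosSemidef)
    (hB : ∀ i, (B i).PosSemidef) (htr : (∑ i, w i • (A i ⊗ₖ B i)).trace = 1) :
    ∑ i, w i • (A i ⊗ₖ B i) ∈ SepSet α β := by
  choose m a ha using fun i => posSemidef_iff_eq_sum_vecMulVec.mp (hA i)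
  choose n b hb using fun i => posSemidef_iff_eq_sum_vecMulVec.mp (hB i)
  have hsum : ∑ i, w i • (A i ⊗ₖ B i) = ∑ p : Σ i, Fin (m i) × Fin (n i),
      w p.1 • (vecState (a p.1 p.2.1) ⊗ₖ vecState (b p.1 p.2.2)) := by
    simp only [Fintype.sum_sigma, ← Finset.smul_sum, ha, hb, sum_kronecker_sum,
      vecState_eq_vecMulVec]
  rw [hsum] at htr ⊢
  exact sum_smul_kronecker_vecState_mem_sepSet (fun p : Σ i, Fin (m i) × Fin (n i) => w p.1)
    (fun p => hw p.1) (fun p => a p.1 p.2.1) (fun p => b p.1 p.2.2) htr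

lemma exists_eq_sum_smul_kronecker_of_mem_sepSet {M : Matrix (α × β) (α × β) ℂ}
    (hM : M ∈ SepSet α β) : ∃ (ι : Type) (_ : Fintype ι) (w : ι → ℝ) (a : ι → α → ℂ)
      (b : ι → β → ℂ), (∀ i, 0 ≤ w i) ∧ M = ∑ i, w i • (vecState (a i) ⊗ₖ vecState (b i)) := by
  obtain ⟨ι, _, w, z, hw, -, hz, rfl⟩ := mem_convexHull_iff_exists_fintype.mp hM
  choose φ ψ hφ hψ hz using hz
  choose a _ ha using hφ
  choose b _ hb using hψ
  exact ⟨ι, inferInstance, w, a, b, hw, by simp only [hz, ha, hb]⟩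

lemma submatrix_swap_mem_sepSet {M : Matrix (α × β) (α × β) ℂ} (hM : M ∈ SepSet α β) :
    M.submatrix Prod.swap Prod.swap ∈ SepSet β α := by
  let swap : Matrix (α × β) (α × β) ℂ →ₗ[ℝ] Matrix (β × α) (β × α) ℂ :=
    { toFun := fun N => N.submatrix Prod.swap Prod.swap
      map_add' := fun _ _ => rfl
      map_smul' := fun _ _ => rfl }
  have : swap '' SepSet α β ⊆ SepSet β α := by
    rw [SepSet, swap.image_convexHull]
    refine convexHull_mono ?_
    rintro _ ⟨_, ⟨φ, ψ, hφ, hψ, rfl⟩, rfl⟩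
    refine ⟨ψ, φ, hψ, hφ, ?_⟩
    ext ⟨x, y⟩ ⟨x', y'⟩
    exact mul_comm _ _
  exact this ⟨M, hM, rfl⟩

end SepSet

lemma trace_eq_sum_trace_diagonalBlock {δ ι : Type*} [Fintype δ] [Fintype ι]
    (N : Matrix (δ × ι) (δ × ι) ℂ) : N.trace = ∑ i, (of fun p q => N (p, i) (q, i)).trace := by
  simp only [trace, diag, of_apply, Fintype.sum_prod_type]
  exact Finset.sum_comm

lemma trace_lmapExt {α β : Type*} [Fintype α] [Fintype β] {Λ : Matrix α α ℂ →ₗ[ℂ] Matrix β β ℂ}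
    (hΛ : ∀ M, (Λ M).trace = M.trace) (k : ℕ)
    (M : Matrix (α × Fin k) (α × Fin k) ℂ) : (lmapExt Λ k M).trace = M.trace := by
  rw [trace_eq_sum_trace_diagonalBlock, trace_eq_sum_trace_diagonalBlock M]
  exact Finset.sum_congr rfl fun i _ => hΛ (of fun p q => M (p, i) (q, i))

lemma lmapExt_real_smul {α β : Type*} (Λ : Matrix α α ℂ →ₗ[ℂ] Matrix β β ℂ) (k : ℕ) (r : ℝ)
    (M : Matrix (α × Fin k) (α × Fin k) ℂ) : lmapExt Λ k (r • M) = r • lmapExt Λ k M := by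
  ext ⟨x, i⟩ ⟨y, j⟩
  exact congrFun (congrFun (Λ.map_smul_of_tower r (of fun p q => M (p, i) (q, j))) x) y

lemma lmapExt_apply_eq_sum_choi {α β : Type*} [Fintype α] [DecidableEq α]
    (Λ : Matrix α α ℂ →ₗ[ℂ] Matrix β β ℂ) (k : ℕ) (M : Matrix (α × Fin k) (α × Fin k) ℂ) (x y : β) (i j : Fin k) :
    lmapExt Λ k M (x, i) (y, j) = ∑ m, ∑ n, M (m, i) (n, j) * choi Λ (m, x) (n, y) := by
  change Λ (of fun p q => M (p, i) (q, j)) x y = _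
  rw [matrix_eq_sum_single (of fun p q => M (p, i) (q, j))]
  simp only [map_sum, Matrix.sum_apply, of_apply]
  refine Finset.sum_congr rfl fun m _ => Finset.sum_congr rfl fun n _ => ?_
  have hsingle : single m n (M (m, i) (n, j)) = M (m, i) (n, j) • single m n 1 := by
    rw [smul_single, smul_eq_mul, mul_one]
  rw [hsingle, map_smul, Matrix.smul_apply, smul_eq_mul]
  rfl

def maxEntVec (α : Type*) [DecidableEq α] : α × α → ℂ := fun p => if p.1 = p.2 then 1 else 0

lemma isDensity_maxEntVec {α : Type*} [Fintype α] [DecidableEq α] [Nonempty α] :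
    IsDensity ((Fintype.card α : ℝ)⁻¹ • vecState (maxEntVec α)) := by
  refine ⟨(vecState_posSemidef _).smul (inv_nonneg.mpr (Nat.cast_nonneg _)), ?_⟩
  rw [trace_smul, trace_vecState, Fintype.sum_prod_type]
  simp [maxEntVec, apply_ite Complex.normSq]

lemma lmapExt_vecState_maxEntVec {β : Type*} {e : ℕ}
    (Λ : Matrix (Fin e) (Fin e) ℂ →ₗ[ℂ] Matrix β β ℂ) :
    lmapExt Λ e (vecState (maxEntVec (Fin e))) = (choi Λ).submatrix Prod.swap Prod.swap := by
  ext ⟨x, m⟩ ⟨y, n⟩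
  have hblock : (of fun p q => vecState (maxEntVec (Fin e)) (p, m) (q, n)) = single m n 1 := by
    ext p q
    simp only [vecState, maxEntVec, of_apply, single_apply]
    grind
  exact congrArg (fun N => Λ N x y) hblock

/-- `compress u M = (⟨ū| ⊗ 1) M (|ū⟩ ⊗ 1)`. -/
def compress {α γ : Type*} [Fintype α] [Fintype γ] [DecidableEq γ] (u : α → ℂ)
    (M : Matrix (α × γ) (α × γ) ℂ) : Matrix γ γ ℂ :=
  let B : Matrix (α × γ) γ ℂ := of fun p j => if p.2 = j then star (u p.1) else 0
  Bᴴ * M * B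

section Compress

variable {α γ : Type*} [Fintype α] [Fintype γ] [DecidableEq γ]

lemma compress_posSemidef (u : α → ℂ) {M : Matrix (α × γ) (α × γ) ℂ} (hM : M.PosSemidef) :
    (compress u M).PosSemidef :=
  hM.conjTranspose_mul_mul_same _

lemma compress_apply (u : α → ℂ) (M : Matrix (α × γ) (α × γ) ℂ) (i j : γ) :
    compress u M i j = ∑ m, ∑ n, u m * M (m, i) (n, j) * star (u n) := by
  simp only [compress, mul_apply, conjTranspose_apply, of_apply, Fintype.sum_prod_type,
    apply_ite star, star_star, star_zero, ite_mul, zero_mul, mul_ite, mul_zero,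
    Finset.sum_ite_eq', Finset.mem_univ, if_true, Finset.sum_mul]
  exact Finset.sum_comm

end Compress

lemma lmapExt_eq_sum_of_choi_eq_sum {α β ι : Type*} [Fintype α] [DecidableEq α] [Fintype ι]
    {Λ : Matrix α α ℂ →ₗ[ℂ] Matrix β β ℂ} (w : ι → ℝ) (a : ι → α → ℂ) (B : ι → Matrix β β ℂ)
    (hΛ : choi Λ = ∑ i, w i • (vecState (a i) ⊗ₖ B i)) (k : ℕ)
    (M : Matrix (α × Fin k) (α × Fin k) ℂ) :
    lmapExt Λ k M = ∑ i, w i • (B i ⊗ₖ compress (a i) M) := by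
  ext ⟨x, i⟩ ⟨y, j⟩
  simp only [lmapExt_apply_eq_sum_choi, hΛ, Matrix.sum_apply, Matrix.smul_apply, kronecker_apply,
    compress_apply, vecState, of_apply, Finset.mul_sum, Finset.smul_sum]
  refine (Finset.sum_congr rfl fun m _ => Finset.sum_comm).trans ?_
  rw [Finset.sum_comm]
  refine Finset.sum_congr rfl fun c _ => Finset.sum_congr rfl fun m _ =>
    Finset.sum_congr rfl fun n _ => ?_
  simp only [Complex.real_smul, RCLike.star_def]
  ring

theorem eb_iff_choi_separable {e b : ℕ} (he : 0 < e)
    (Λ : Matrix (Fin e) (Fin e) ℂ →ₗ[ℂ] Matrix (Fin b) (Fin b) ℂ) (hΛ : IsCPTP Λ) :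
    (∀ (k : ℕ) (ρ : Matrix (Fin e × Fin k) (Fin e × Fin k) ℂ), IsDensity ρ →
        lmapExt Λ k ρ ∈ SepSet (Fin b) (Fin k)) ↔
      (e : ℝ)⁻¹ • choi Λ ∈ SepSet (Fin e) (Fin b) := by
  have : Nonempty (Fin e) := ⟨⟨0, he⟩⟩
  constructor
  · intro hEB
    have hsep := hEB e _ (isDensity_maxEntVec (α := Fin e))
    rw [Fintype.card_fin, lmapExt_real_smul, lmapExt_vecState_maxEntVec] at hsep
    -- `Prod.swap` is involutive, so swapping back gives `e⁻¹ • choi Λ` definitionally.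
    exact submatrix_swap_mem_sepSet hsep
  · intro hsep k ρ hρ
    obtain ⟨ι, _, w, a, v, hw, hdecomp⟩ := exists_eq_sum_smul_kronecker_of_mem_sepSet hsep
    have hchoi : choi Λ = ∑ i, ((e : ℝ) * w i) • (vecState (a i) ⊗ₖ vecState (v i)) := by
      rw [← smul_inv_smul₀ (Nat.cast_ne_zero.mpr he.ne' : (e : ℝ) ≠ 0) (choi Λ), hdecomp,
        Finset.smul_sum]
      simp only [smul_smul]
    have htr : (lmapExt Λ k ρ).trace = 1 := by rw [trace_lmapExt hΛ.2, hρ.2]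
    rw [lmapExt_eq_sum_of_choi_eq_sum _ _ _ hchoi] at htr ⊢
    exact sum_smul_kronecker_mem_sepSet _ (fun i => mul_nonneg (Nat.cast_nonneg e) (hw i)) _ _
      (fun i => vecState_posSemidef _) (fun i => compress_posSemidef _ hρ.1) htr
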